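/- In the pentagon mutation sequence with ε⁽⁰⁾_{ij} = 1 and mutation sequence i,j,i,j,i with signs +,+,−,−,−, the five pulled-back vectors are: x⁽¹⁾ = x_i, C⁽¹⁾(x⁽²⁾) = x_j, C⁽¹⁾C⁽²⁾(−x⁽³⁾) = x_i, C⁽¹⁾C⁽²⁾C⁽³⁾(−x⁽⁴⁾) = x_i + x_j, and C⁽¹⁾C⁽²⁾C⁽³⁾C⁽⁴⁾(−x⁽⁵⁾) = x_j, where x⁽ᵃ⁾ denotes the basis vector of the mutated edge in V_{T⁽ᵃ⁻¹⁾}, and all identities hold in V_{T⁽⁰⁾}. -/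

import Mathlib

noncomputable section

/-- The positive part `[a]₊ = max(a,0)` of a real number. -/
def plusPart (a : ℝ) : ℝ := max a 0

/-- Matrix mutation at `k`: `ε'_{ef} = −ε_{ef}` if `k ∈ {e,f}`, and otherwise
`ε'_{ef} = ε_{ef} + (|ε_{ek}|ε_{kf} + ε_{ek}|ε_{kf}|)/2`. -/
def mutMat {I : Type*} [DecidableEq I] (ε : I → I → ℝ) (k : I) : I → I → ℝ :=
  fun e f =>
    if e = k ∨ f = k then -ε e f
    else ε e f + (|ε e k| * ε k f + ε e k * |ε k f|) / 2

/-- The cluster mutation linear map `C_k^{(ϵ)}` from the mutated space (with basis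
`bNew`) to the original space (with basis `bOld` and exchange matrix `ε`), sending
`x'_k ↦ −x_k` and `x'_e ↦ x_e + [ϵ ε_{ek}]₊ x_k` for `e ≠ k`. -/
def mutMap {I : Type*} [Fintype I] [DecidableEq I]
    {M M' : Type*} [AddCommGroup M] [Module ℝ M] [AddCommGroup M'] [Module ℝ M']
    (bNew : Module.Basis I ℝ M') (bOld : Module.Basis I ℝ M)
    (ε : I → I → ℝ) (k : I) (ϵ : ℝ) : M' →ₗ[ℝ] M :=
  bNew.constr ℝ fun e =>
    if e = k then -(bOld k) else bOld e + plusPart (ϵ * ε e k) • bOld k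

/-! Only entries of the mutated exchange matrices lying in the row or column of the mutation
index enter the maps, and such an entry is just the sign flip of the previous one; so all
relevant entries are `±ε_{ij} = ±1`, and each pull-back is a one-line computation on basis
vectors. -/

lemma plusPart_of_nonpos {a : ℝ} (h : a ≤ 0) : plusPart a = 0 := max_eq_right h

lemma plusPart_of_nonneg {a : ℝ} (h : 0 ≤ a) : plusPart a = a := max_eq_left h

section mutMat

variable {I : Type*} [DecidableEq I] (ε : I → I → ℝ) (k : I)

lemma mutMat_apply_self_left (f : I) : mutMat ε k k f = -ε k f := by
  simp [mutMat]

lemma mutMat_apply_self_right (e : I) : mutMat ε k e k = -ε e k := by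
  simp [mutMat]

end mutMat

section mutMap

variable {I : Type*} [Fintype I] [DecidableEq I]
  {M M' : Type*} [AddCommGroup M] [Module ℝ M] [AddCommGroup M'] [Module ℝ M']
  (bNew : Module.Basis I ℝ M') (bOld : Module.Basis I ℝ M)
  (ε : I → I → ℝ) (k : I) (ϵ : ℝ)

lemma mutMap_apply_basis (e : I) :
    mutMap bNew bOld ε k ϵ (bNew e) =
      if e = k then -bOld k else bOld e + plusPart (ϵ * ε e k) • bOld k :=
  bNew.constr_basis ℝ _ e

lemma mutMap_apply_basis_self : mutMap bNew bOld ε k ϵ (bNew k) = -bOld k := by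
  rw [mutMap_apply_basis, if_pos rfl]

lemma mutMap_apply_basis_of_ne {e : I} (he : e ≠ k) :
    mutMap bNew bOld ε k ϵ (bNew e) = bOld e + plusPart (ϵ * ε e k) • bOld k := by
  rw [mutMap_apply_basis, if_neg he]

lemma mutMap_apply_basis_of_nonpos {e : I} (he : e ≠ k) (hneg : ϵ * ε e k ≤ 0) :
    mutMap bNew bOld ε k ϵ (bNew e) = bOld e := by
  rw [mutMap_apply_basis_of_ne _ _ _ _ _ he, plusPart_of_nonpos hneg, zero_smul, add_zero]

lemma mutMap_apply_basis_of_eq_one {e : I} (he : e ≠ k) (hone : ϵ * ε e k = 1) :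
    mutMap bNew bOld ε k ϵ (bNew e) = bOld e + bOld k := by
  rw [mutMap_apply_basis_of_ne _ _ _ _ _ he, hone, plusPart_of_nonneg zero_le_one, one_smul]

end mutMap

/-- In the pentagon mutation sequence with `ε_{ij} = 1`, mutations at `i,j,i,j,i`
with signs `+,+,−,−,−`, the five pulled-back vectors are
`x_i`, `x_j`, `x_i`, `x_i + x_j`, and `x_j` in `V_{T⁽⁰⁾}`. -/
theorem mutMap_pentagon_pullbacks
    {I : Type*} [Fintype I] [DecidableEq I]
    {M : Type*} [AddCommGroup M] [Module ℝ M]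
    (ε : I → I → ℝ) (hskew : ∀ e f, ε f e = -ε e f)
    (i j : I) (hij : i ≠ j) (h1 : ε i j = 1)
    (b : Module.Basis I ℝ M) :
    b i = b i ∧
    (mutMap b b ε i 1) (b j) = b j ∧
    (mutMap b b ε i 1) ((mutMap b b (mutMat ε i) j 1) (-(b i))) = b i ∧
    (mutMap b b ε i 1) ((mutMap b b (mutMat ε i) j 1)
      ((mutMap b b (mutMat (mutMat ε i) j) i (-1)) (-(b j)))) = b i + b j ∧
    (mutMap b b ε i 1) ((mutMap b b (mutMat ε i) j 1)
      ((mutMap b b (mutMat (mutMat ε i) j) i (-1))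
        ((mutMap b b (mutMat (mutMat (mutMat ε i) j) i) j (-1)) (-(b i))))) = b j := by
  have hji : ε j i = -1 := by rw [hskew, h1]
  have ε₁ij : mutMat ε i i j = -1 := by rw [mutMat_apply_self_left, h1]
  have ε₂ji : mutMat (mutMat ε i) j j i = -1 := by
    rw [mutMat_apply_self_left, mutMat_apply_self_right, hji, neg_neg]
  have ε₃ij : mutMat (mutMat (mutMat ε i) j) i i j = -1 := by
    rw [mutMat_apply_self_left, mutMat_apply_self_right, ε₁ij, neg_neg]
  have C₁i := mutMap_apply_basis_self b b ε i 1
  have C₁j := mutMap_apply_basis_of_nonpos b b ε i 1 hij.symm (by rw [hji]; norm_num)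
  have C₂i := mutMap_apply_basis_of_nonpos b b (mutMat ε i) j 1 hij (by rw [ε₁ij]; norm_num)
  have C₂j := mutMap_apply_basis_self b b (mutMat ε i) j 1
  have C₃i := mutMap_apply_basis_self b b (mutMat (mutMat ε i) j) i (-1)
  have C₃j := mutMap_apply_basis_of_eq_one b b (mutMat (mutMat ε i) j) i (-1) hij.symm
    (by rw [ε₂ji]; norm_num)
  have C₄i := mutMap_apply_basis_of_eq_one b b (mutMat (mutMat (mutMat ε i) j) i) j (-1) hij
    (by rw [ε₃ij]; norm_num)
  refine ⟨rfl, C₁j, ?_, ?_, ?_⟩ <;>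
    simp only [map_neg, map_add, C₁i, C₁j, C₂i, C₂j, C₃i, C₃j, C₄i] <;> abel
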